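/- arXiv:2604.05871 — 8 statements merged into one kernel-verified Lean document; each statement's English description precedes it below -/
import Mathlib

section
/- Let V be a ℂ-linear subspace of the n×n complex matrices that is closed under conjugation by the representation, i.e., π(g) S π(g)* ∈ V for every S ∈ V and g ∈ G. If every element of V that commutes with π(g) for all g ∈ G is a scalar multiple of the identity matrix, then for every S ∈ V the matrix Π_G(S) is a scalar multiple of the identity and lies in V; in particular G is a decoupling group for every subspace of V. -/
/-- The symmetrization map `Π_G` associated with a unitary representation
`π : G →* U(n)`: `Π_G(S) = (1/|G|) ∑ g, π(g) S π(g)*`. -/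
noncomputable def symG {G : Type*} [Group G] [Fintype G] {n : ℕ}
    (π : G →* Matrix.unitaryGroup (Fin n) ℂ)
    (S : Matrix (Fin n) (Fin n) ℂ) : Matrix (Fin n) (Fin n) ℂ :=
  (Fintype.card G : ℂ)⁻¹ • ∑ g : G,
    (π g : Matrix (Fin n) (Fin n) ℂ) * S * star (π g : Matrix (Fin n) (Fin n) ℂ)

/-- Let `V` be a subspace of matrices closed under conjugation by the representation.
If `G` is an inaccessible symmetry for `V` (every element of `V` commuting with all
`π(g)` is a scalar multiple of the identity), then for every `S ∈ V` the matrix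
`Π_G(S)` is a scalar multiple of the identity and lies in `V`; in particular `G` is a
decoupling group for every subspace of `V`. -/
theorem symG_decoupling_of_closed_subspace {G : Type*} [Group G] [Fintype G] {n : ℕ}
    (hn : 0 < n) (π : G →* Matrix.unitaryGroup (Fin n) ℂ)
    (V : Submodule ℂ (Matrix (Fin n) (Fin n) ℂ))
    (hclosed : ∀ S ∈ V, ∀ g : G,
      (π g : Matrix (Fin n) (Fin n) ℂ) * S * star (π g : Matrix (Fin n) (Fin n) ℂ) ∈ V)
    (hinacc : ∀ S ∈ V,
      (∀ g : G, (π g : Matrix (Fin n) (Fin n) ℂ) * S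
          = S * (π g : Matrix (Fin n) (Fin n) ℂ)) →
      ∃ c : ℂ, S = c • (1 : Matrix (Fin n) (Fin n) ℂ)) :
    (∀ S ∈ V, (∃ c : ℂ, symG π S = c • (1 : Matrix (Fin n) (Fin n) ℂ)) ∧ symG π S ∈ V) ∧
    (∀ W : Submodule ℂ (Matrix (Fin n) (Fin n) ℂ), W ≤ V → ∀ S ∈ W,
      ∃ c : ℂ, symG π S = c • (1 : Matrix (Fin n) (Fin n) ℂ)) := by
  have hmem : ∀ S ∈ V, symG π S ∈ V := by
    intro S hS
    apply V.smul_mem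
    exact V.sum_mem fun g _ => hclosed S hS g
  have hcomm : ∀ S ∈ V, ∀ h : G,
      (π h : Matrix (Fin n) (Fin n) ℂ) * symG π S = symG π S * (π h) := by
    intro S _ h
    unfold symG
    rw [Matrix.mul_smul, Matrix.smul_mul]
    congr 1
    rw [Finset.mul_sum, Finset.sum_mul]
    refine Fintype.sum_equiv (Equiv.mulLeft h) _ _ fun g => ?_
    have h1 : star (π h : Matrix (Fin n) (Fin n) ℂ) * (π h : Matrix (Fin n) (Fin n) ℂ) = 1 :=
      Matrix.UnitaryGroup.star_mul_self (π h)
    simp only [Equiv.coe_mulLeft, map_mul, MulMemClass.coe_mul, StarMul.star_mul]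
    calc (π h : Matrix (Fin n) (Fin n) ℂ) * ((π g : Matrix (Fin n) (Fin n) ℂ) * S *
            star (π g : Matrix (Fin n) (Fin n) ℂ))
        = (π h : Matrix (Fin n) (Fin n) ℂ) * (π g : Matrix (Fin n) (Fin n) ℂ) * S *
            (star (π g : Matrix (Fin n) (Fin n) ℂ) *
              (star (π h : Matrix (Fin n) (Fin n) ℂ) * (π h : Matrix (Fin n) (Fin n) ℂ))) := by
          rw [h1]; noncomm_ring
      _ = (π h : Matrix (Fin n) (Fin n) ℂ) * (π g : Matrix (Fin n) (Fin n) ℂ) * S *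
            (star (π g : Matrix (Fin n) (Fin n) ℂ) * star (π h : Matrix (Fin n) (Fin n) ℂ)) *
            (π h : Matrix (Fin n) (Fin n) ℂ) := by noncomm_ring
  have main : ∀ S ∈ V, (∃ c : ℂ, symG π S = c • (1 : Matrix (Fin n) (Fin n) ℂ)) ∧ symG π S ∈ V := by
    intro S hS
    exact ⟨hinacc _ (hmem S hS) (hcomm S hS), hmem S hS⟩
  exact ⟨main, fun W hW S hS => (main S (hW hS)).1⟩
end

section
/- Let θ : G → ℂ be a function with |θ(g)| = 1 for all g, and let (ψ_i)_{i ∈ ι} be an orthonormal family of vectors satisfying π(g) ψ_i = θ(g) • ψ_i for every g ∈ G and every i (the same phase function for all i). Let E be an n×n complex matrix such that Π_G(E) = c • 1 for some scalar c ∈ ℂ. Then for all indices i, j: ⟨ψ_i, E ψ_j⟩ = c if i = j and ⟨ψ_i, E ψ_j⟩ = 0 if i ≠ j. In other words, the span of the ψ_i is a quantum error-detecting code for E. -/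
open Matrix

namespace Matrix

variable {𝕜 : Type*} [RCLike 𝕜] {m : Type*} [Fintype m] [DecidableEq m]

theorem inner_toEuclideanLin_mul_mul_star_of_eigenvector {U E : Matrix m m 𝕜} {a : 𝕜}
    (ha : ‖a‖ = 1) {x y : EuclideanSpace 𝕜 m}
    (hx : toEuclideanLin (star U) x = a • x) (hy : toEuclideanLin (star U) y = a • y) :
    inner 𝕜 x (toEuclideanLin (U * E * star U) y) = inner 𝕜 x (toEuclideanLin E y) := by
  have hU : toEuclideanLin (star U) = (toEuclideanLin U).adjoint :=
    toEuclideanLin_conjTranspose_eq_adjoint U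
  have hconj : (starRingEnd 𝕜) a * a = 1 := by
    rw [RCLike.conj_mul, ha]; simp
  simp only [toLpLin_mul_same, LinearMap.comp_apply]
  rw [← LinearMap.adjoint_inner_left, ← hU, hx, hy, map_smul, inner_smul_left,
    inner_smul_right, ← mul_assoc, hconj, one_mul]

end Matrix

theorem inner_toEuclideanLin_symG_of_eigenvector {G : Type*} [Group G] [Fintype G] {n : ℕ}
    (π : G →* Matrix.unitaryGroup (Fin n) ℂ) {θ : G → ℂ} (hθ : ∀ g, ‖θ g‖ = 1)
    {x y : EuclideanSpace ℂ (Fin n)}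
    (hx : ∀ g, toEuclideanLin (π g : Matrix (Fin n) (Fin n) ℂ) x = θ g • x)
    (hy : ∀ g, toEuclideanLin (π g : Matrix (Fin n) (Fin n) ℂ) y = θ g • y)
    (E : Matrix (Fin n) (Fin n) ℂ) :
    inner ℂ x (toEuclideanLin (symG π E) y) = inner ℂ x (toEuclideanLin E y) := by
  have hstar (g : G) : star (π g : Matrix (Fin n) (Fin n) ℂ) = π g⁻¹ := by
    rw [map_inv]; rfl
  have hterm (g : G) : inner ℂ x (toEuclideanLin ((π g : Matrix (Fin n) (Fin n) ℂ) * E *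
      star (π g : Matrix (Fin n) (Fin n) ℂ)) y) = inner ℂ x (toEuclideanLin E y) :=
    inner_toEuclideanLin_mul_mul_star_of_eigenvector (hθ g⁻¹)
      (by rw [hstar, hx]) (by rw [hstar, hy])
  rw [symG, map_smul, map_sum, LinearMap.smul_apply, LinearMap.sum_apply, inner_smul_right,
    inner_sum, Finset.sum_congr rfl fun g _ => hterm g, Finset.sum_const, Finset.card_univ,
    nsmul_eq_mul, inv_mul_cancel_left₀ (Nat.cast_ne_zero.mpr Fintype.card_ne_zero)]

theorem error_detection_of_symG_scalar_general {G : Type*} [Group G] [Fintype G] {n : ℕ}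
    (π : G →* Matrix.unitaryGroup (Fin n) ℂ)
    {ι : Type*} [DecidableEq ι] (θ : G → ℂ) (hθ : ∀ g, ‖θ g‖ = 1)
    (ψ : ι → EuclideanSpace ℂ (Fin n)) (hortho : Orthonormal ℂ ψ)
    (heig : ∀ (g : G) (i : ι),
      Matrix.toEuclideanLin (π g : Matrix (Fin n) (Fin n) ℂ) (ψ i) = θ g • ψ i)
    (E : Matrix (Fin n) (Fin n) ℂ) (c : ℂ)
    (hE : symG π E = c • (1 : Matrix (Fin n) (Fin n) ℂ)) :
    ∀ i j : ι, (inner ℂ (ψ i) (Matrix.toEuclideanLin E (ψ j)) : ℂ)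
      = if i = j then c else 0 := by
  intro i j
  rw [← inner_toEuclideanLin_symG_of_eigenvector π hθ (heig · i) (heig · j), hE, map_smul,
    toLpLin_one, LinearMap.smul_apply, LinearMap.id_apply, inner_smul_right,
    orthonormal_iff_ite.mp hortho i j, mul_ite, mul_one, mul_zero]

/-- If an orthonormal family `(ψ i)` transforms under `G` with a common unimodular
phase function and `Π_G(E) = c • 1`, then `⟨ψ i, E ψ j⟩ = c` for `i = j` and `0`
otherwise: the span of the `ψ i` is a quantum error-detecting code for `E`. -/
theorem error_detection_of_symG_scalar {G : Type*} [Group G] [Fintype G] {n : ℕ}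
    (hn : 0 < n) (π : G →* Matrix.unitaryGroup (Fin n) ℂ)
    {ι : Type*} [DecidableEq ι] (θ : G → ℂ) (hθ : ∀ g, ‖θ g‖ = 1)
    (ψ : ι → EuclideanSpace ℂ (Fin n)) (hortho : Orthonormal ℂ ψ)
    (heig : ∀ (g : G) (i : ι),
      Matrix.toEuclideanLin (π g : Matrix (Fin n) (Fin n) ℂ) (ψ i) = θ g • ψ i)
    (E : Matrix (Fin n) (Fin n) ℂ) (c : ℂ)
    (hE : symG π E = c • (1 : Matrix (Fin n) (Fin n) ℂ)) :
    ∀ i j : ι, (inner ℂ (ψ i) (Matrix.toEuclideanLin E (ψ j)) : ℂ)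
      = if i = j then c else 0 :=
  error_detection_of_symG_scalar_general π θ hθ ψ hortho heig E c hE
end

section
/- Let θ : G → ℂ be a function with |θ(g)| = 1 for all g, and let (ψ_i)_{i ∈ ι} be an orthonormal family of vectors satisfying π(g) ψ_i = θ(g) • ψ_i for every g ∈ G and every i. Let (E_p)_{p ∈ κ} be a family of n×n complex matrices (error operators) such that for all p, q there exists a scalar c_{pq} ∈ ℂ with Π_G(E_p* E_q) = c_{pq} • 1. Then the Knill–Laflamme conditions hold: for all p, q and all indices i, j, ⟨ψ_i, E_p* E_q ψ_j⟩ = c_{pq} if i = j and 0 if i ≠ j; hence the span of the ψ_i is a quantum error-correcting code for the errors E_p. -/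
open ComplexConjugate Matrix

section UnitaryEigenvectors

variable {𝕜 E : Type*} [RCLike 𝕜] [NormedAddCommGroup E] [InnerProductSpace 𝕜 E] [CompleteSpace E]
  {U : E →L[𝕜] E} {a : 𝕜}

lemma star_apply_eq_conj_smul_of_apply_eq_smul (hU : U ∈ unitary (E →L[𝕜] E)) (ha : ‖a‖ = 1)
    {x : E} (hx : U x = a • x) : star U x = conj a • x := by
  have hx' : star U (U x) = x := by
    rw [← mul_apply_eq_comp, Unitary.star_mul_self_of_mem hU, one_apply_eq_self]
  calc star U x = (conj a * a) • star U x := by rw [RCLike.conj_mul, ha]; simp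
    _ = conj a • x := by rw [mul_smul, ← map_smul, ← hx, hx']

lemma inner_unitary_conj_apply_of_apply_eq_smul (hU : U ∈ unitary (E →L[𝕜] E)) (ha : ‖a‖ = 1)
    {x y : E} (hx : U x = a • x) (hy : U y = a • y) (M : E →L[𝕜] E) :
    inner 𝕜 x ((U * M * star U) y) = inner 𝕜 x (M y) := by
  calc inner 𝕜 x ((U * M * star U) y) = inner 𝕜 (star U x) (M (star U y)) := by
        rw [ContinuousLinearMap.star_eq_adjoint, ContinuousLinearMap.adjoint_inner_left]; rfl
    _ = (a * conj a) * inner 𝕜 x (M y) := by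
        rw [star_apply_eq_conj_smul_of_apply_eq_smul hU ha hx,
          star_apply_eq_conj_smul_of_apply_eq_smul hU ha hy, map_smul, inner_smul_left,
          inner_smul_right, RCLike.conj_conj, mul_assoc]
    _ = inner 𝕜 x (M y) := by rw [RCLike.mul_conj, ha]; simp

end UnitaryEigenvectors

lemma inner_symG_apply {G : Type*} [Group G] [Fintype G] {n : ℕ}
    (π : G →* unitaryGroup (Fin n) ℂ) {θ : G → ℂ} (hθ : ∀ g, ‖θ g‖ = 1)
    {x y : EuclideanSpace ℂ (Fin n)}
    (hx : ∀ g, toEuclideanLin (π g : Matrix (Fin n) (Fin n) ℂ) x = θ g • x)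
    (hy : ∀ g, toEuclideanLin (π g : Matrix (Fin n) (Fin n) ℂ) y = θ g • y)
    (S : Matrix (Fin n) (Fin n) ℂ) :
    inner ℂ x (toEuclideanLin (symG π S) y) = inner ℂ x (toEuclideanLin S y) := by
  have hterm (g : G) : inner ℂ x (toEuclideanLin
      ((π g : Matrix (Fin n) (Fin n) ℂ) * S * star (π g : Matrix (Fin n) (Fin n) ℂ)) y)
      = inner ℂ x (toEuclideanLin S y) := by
    have h := inner_unitary_conj_apply_of_apply_eq_smul (x := x) (y := y)
      (Unitary.map_mem (toEuclideanCLM (n := Fin n) (𝕜 := ℂ)) (π g).2) (hθ g) (hx g) (hy g)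
      (toEuclideanCLM (n := Fin n) (𝕜 := ℂ) S)
    rwa [← map_star, ← map_mul, ← map_mul] at h
  simp only [symG, map_smul, map_sum, LinearMap.smul_apply, LinearMap.sum_apply,
    inner_smul_right, inner_sum, hterm, Finset.sum_const, Finset.card_univ, nsmul_eq_mul]
  field_simp

theorem knill_laflamme_of_symG_scalar_general {G : Type*} [Group G] [Fintype G] {n : ℕ}
    (π : G →* Matrix.unitaryGroup (Fin n) ℂ)
    {ι κ : Type*} [DecidableEq ι] (θ : G → ℂ) (hθ : ∀ g, ‖θ g‖ = 1)
    (ψ : ι → EuclideanSpace ℂ (Fin n)) (hortho : Orthonormal ℂ ψ)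
    (heig : ∀ (g : G) (i : ι),
      Matrix.toEuclideanLin (π g : Matrix (Fin n) (Fin n) ℂ) (ψ i) = θ g • ψ i)
    (E : κ → Matrix (Fin n) (Fin n) ℂ) (c : κ → κ → ℂ)
    (hE : ∀ p q : κ, symG π (star (E p) * E q) = c p q • (1 : Matrix (Fin n) (Fin n) ℂ)) :
    ∀ (p q : κ) (i j : ι),
      (inner ℂ (ψ i) (Matrix.toEuclideanLin (star (E p) * E q) (ψ j)) : ℂ)
        = if i = j then c p q else 0 := by
  intro p q i j
  rw [← inner_symG_apply π hθ (heig · i) (heig · j), hE, map_smul, toLpLin_one,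
    LinearMap.smul_apply, LinearMap.id_apply, inner_smul_right, orthonormal_iff_ite.mp hortho,
    mul_ite, mul_one, mul_zero]

/-- Knill–Laflamme conditions from symmetrization: if an orthonormal family `(ψ i)`
transforms under `G` with a common unimodular phase function and
`Π_G(E_p* E_q) = c_{pq} • 1` for all `p, q`, then
`⟨ψ i, E_p* E_q ψ j⟩ = c_{pq} δ_{ij}`; hence the span of the `ψ i` is a quantum
error-correcting code for the errors `E_p`. -/
theorem knill_laflamme_of_symG_scalar {G : Type*} [Group G] [Fintype G] {n : ℕ}
    (hn : 0 < n) (π : G →* Matrix.unitaryGroup (Fin n) ℂ)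
    {ι κ : Type*} [DecidableEq ι] (θ : G → ℂ) (hθ : ∀ g, ‖θ g‖ = 1)
    (ψ : ι → EuclideanSpace ℂ (Fin n)) (hortho : Orthonormal ℂ ψ)
    (heig : ∀ (g : G) (i : ι),
      Matrix.toEuclideanLin (π g : Matrix (Fin n) (Fin n) ℂ) (ψ i) = θ g • ψ i)
    (E : κ → Matrix (Fin n) (Fin n) ℂ) (c : κ → κ → ℂ)
    (hE : ∀ p q : κ, symG π (star (E p) * E q) = c p q • (1 : Matrix (Fin n) (Fin n) ℂ)) :
    ∀ (p q : κ) (i j : ι),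
      (inner ℂ (ψ i) (Matrix.toEuclideanLin (star (E p) * E q) (ψ j)) : ℂ)
        = if i = j then c p q else 0 :=
  knill_laflamme_of_symG_scalar_general π θ hθ ψ hortho heig E c hE
end

section
/- Let θ : G → ℂ be a function with |θ(g)| = 1 for all g, and let (ψ_i)_{i ∈ ι} be an orthonormal family of vectors satisfying π(g) ψ_i = θ(g) • ψ_i for every g ∈ G and every i. Let (E_p)_{p ∈ κ} be a family of n×n complex matrices, and let V be a ℂ-linear subspace of matrices such that (a) E_p* E_q ∈ V for all p, q, (b) π(g) S π(g)* ∈ V for every S ∈ V and g ∈ G, and (c) every element of V commuting with π(g) for all g ∈ G is a scalar multiple of the identity. Then for all p, q there exists a scalar c_{pq} ∈ ℂ such that ⟨ψ_i, E_p* E_q ψ_j⟩ = c_{pq} if i = j and 0 if i ≠ j, i.e., the Knill–Laflamme quantum error-correction conditions hold for the errors E_p on the span of the ψ_i. -/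
open Matrix

section
variable {𝕜 m : Type*} [RCLike 𝕜] [Fintype m] [DecidableEq m]

theorem inner_toEuclideanLin_conj_of_star_eigen {U : Matrix m m 𝕜} {s : 𝕜} (hs : ‖s‖ = 1)
    {x y : EuclideanSpace 𝕜 m} (hx : toEuclideanLin (star U) x = s • x)
    (hy : toEuclideanLin (star U) y = s • y) (S : Matrix m m 𝕜) :
    inner 𝕜 x (toEuclideanLin (U * S * star U) y) = inner 𝕜 x (toEuclideanLin S y) := by
  have hadj : ∀ z, inner 𝕜 x (toEuclideanLin U z) = inner 𝕜 (toEuclideanLin (star U) x) z := by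
    intro z
    rw [star_eq_conjTranspose, toEuclideanLin_conjTranspose_eq_adjoint,
      LinearMap.adjoint_inner_left]
  have hs' : starRingEnd 𝕜 s * s = 1 := by
    rw [RCLike.conj_mul, hs]; norm_num
  rw [toLpLin_mul_same, toLpLin_mul_same, LinearMap.comp_apply, LinearMap.comp_apply, hadj, hx,
    hy, map_smul, inner_smul_left, inner_smul_right, ← mul_assoc, hs', one_mul]

end

section
variable {G : Type*} [Group G] {n : ℕ} (π : G →* unitaryGroup (Fin n) ℂ)

theorem coe_map_inv_eq_star (g : G) :
    (π g⁻¹ : Matrix (Fin n) (Fin n) ℂ) = star (π g : Matrix (Fin n) (Fin n) ℂ) := by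
  rw [map_inv]; rfl

variable [Fintype G]

theorem symG_mem {V : Submodule ℂ (Matrix (Fin n) (Fin n) ℂ)}
    (hV : ∀ S ∈ V, ∀ g : G,
      (π g : Matrix (Fin n) (Fin n) ℂ) * S * star (π g : Matrix (Fin n) (Fin n) ℂ) ∈ V)
    {S : Matrix (Fin n) (Fin n) ℂ} (hS : S ∈ V) : symG π S ∈ V :=
  V.smul_mem _ (V.sum_mem fun g _ => hV S hS g)

theorem mul_symG_mul_star (g : G) (S : Matrix (Fin n) (Fin n) ℂ) :
    (π g : Matrix (Fin n) (Fin n) ℂ) * symG π S * star (π g : Matrix (Fin n) (Fin n) ℂ)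
      = symG π S := by
  rw [symG, Matrix.mul_smul, Matrix.smul_mul, Finset.mul_sum, Finset.sum_mul]
  congr 1
  refine Fintype.sum_equiv (Equiv.mulLeft g) _ _ fun h => ?_
  simp only [Equiv.coe_mulLeft, map_mul, Submonoid.coe_mul, star_mul, Matrix.mul_assoc]

theorem commute_symG (g : G) (S : Matrix (Fin n) (Fin n) ℂ) :
    Commute (π g : Matrix (Fin n) (Fin n) ℂ) (symG π S) := by
  have h := congrArg (· * (π g : Matrix (Fin n) (Fin n) ℂ)) (mul_symG_mul_star π g S)
  simpa [Commute, SemiconjBy, Matrix.mul_assoc, (π g).2.1] using h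

theorem inner_symG_of_eigen {θ : G → ℂ} (hθ : ∀ g, ‖θ g‖ = 1) {x y : EuclideanSpace ℂ (Fin n)}
    (hx : ∀ g, toEuclideanLin (π g : Matrix (Fin n) (Fin n) ℂ) x = θ g • x)
    (hy : ∀ g, toEuclideanLin (π g : Matrix (Fin n) (Fin n) ℂ) y = θ g • y)
    (S : Matrix (Fin n) (Fin n) ℂ) :
    inner ℂ x (toEuclideanLin (symG π S) y) = inner ℂ x (toEuclideanLin S y) := by
  have hterm : ∀ g : G, inner ℂ x (toEuclideanLin
      ((π g : Matrix (Fin n) (Fin n) ℂ) * S * star (π g : Matrix (Fin n) (Fin n) ℂ)) y)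
      = inner ℂ x (toEuclideanLin S y) := fun g =>
    inner_toEuclideanLin_conj_of_star_eigen (hθ g⁻¹) (coe_map_inv_eq_star π g ▸ hx g⁻¹)
      (coe_map_inv_eq_star π g ▸ hy g⁻¹) S
  simp only [symG, map_smul, map_sum, LinearMap.smul_apply, LinearMap.sum_apply, inner_smul_right,
    inner_sum, hterm, Finset.sum_const, Finset.card_univ, nsmul_eq_mul]
  field_simp

end

theorem knill_laflamme_of_inaccessible_general {G : Type*} [Group G] [Fintype G] {n : ℕ}
    (π : G →* Matrix.unitaryGroup (Fin n) ℂ)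
    {ι κ : Type*} [DecidableEq ι] (θ : G → ℂ) (hθ : ∀ g, ‖θ g‖ = 1)
    (ψ : ι → EuclideanSpace ℂ (Fin n)) (hortho : Orthonormal ℂ ψ)
    (heig : ∀ (g : G) (i : ι),
      Matrix.toEuclideanLin (π g : Matrix (Fin n) (Fin n) ℂ) (ψ i) = θ g • ψ i)
    (E : κ → Matrix (Fin n) (Fin n) ℂ)
    (V : Submodule ℂ (Matrix (Fin n) (Fin n) ℂ))
    (hEV : ∀ p q : κ, star (E p) * E q ∈ V)
    (hclosed : ∀ S ∈ V, ∀ g : G,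
      (π g : Matrix (Fin n) (Fin n) ℂ) * S * star (π g : Matrix (Fin n) (Fin n) ℂ) ∈ V)
    (hinacc : ∀ S ∈ V,
      (∀ g : G, (π g : Matrix (Fin n) (Fin n) ℂ) * S
          = S * (π g : Matrix (Fin n) (Fin n) ℂ)) →
      ∃ c : ℂ, S = c • (1 : Matrix (Fin n) (Fin n) ℂ)) :
    ∀ p q : κ, ∃ c : ℂ, ∀ i j : ι,
      (inner ℂ (ψ i) (Matrix.toEuclideanLin (star (E p) * E q) (ψ j)) : ℂ)
        = if i = j then c else 0 := by
  intro p q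
  obtain ⟨c, hc⟩ := hinacc _ (symG_mem π hclosed (hEV p q)) fun g => commute_symG π g _
  refine ⟨c, fun i j => ?_⟩
  rw [← inner_symG_of_eigen π hθ (heig · i) (heig · j), hc, map_smul, toLpLin_one,
    LinearMap.smul_apply, LinearMap.id_apply, inner_smul_right,
    orthonormal_iff_ite.mp hortho i j, mul_ite, mul_one, mul_zero]

/-- Knill–Laflamme conditions from an inaccessible symmetry: suppose the orthonormal
family `(ψ i)` transforms under `G` with a common unimodular phase function, the
products `E_p* E_q` lie in a subspace `V` closed under conjugation by the
representation, and every element of `V` commuting with all `π(g)` is a scalar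
multiple of the identity.  Then for all `p, q` there is a scalar `c_{pq}` with
`⟨ψ i, E_p* E_q ψ j⟩ = c_{pq} δ_{ij}`. -/
theorem knill_laflamme_of_inaccessible {G : Type*} [Group G] [Fintype G] {n : ℕ}
    (hn : 0 < n) (π : G →* Matrix.unitaryGroup (Fin n) ℂ)
    {ι κ : Type*} [DecidableEq ι] (θ : G → ℂ) (hθ : ∀ g, ‖θ g‖ = 1)
    (ψ : ι → EuclideanSpace ℂ (Fin n)) (hortho : Orthonormal ℂ ψ)
    (heig : ∀ (g : G) (i : ι),
      Matrix.toEuclideanLin (π g : Matrix (Fin n) (Fin n) ℂ) (ψ i) = θ g • ψ i)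
    (E : κ → Matrix (Fin n) (Fin n) ℂ)
    (V : Submodule ℂ (Matrix (Fin n) (Fin n) ℂ))
    (hEV : ∀ p q : κ, star (E p) * E q ∈ V)
    (hclosed : ∀ S ∈ V, ∀ g : G,
      (π g : Matrix (Fin n) (Fin n) ℂ) * S * star (π g : Matrix (Fin n) (Fin n) ℂ) ∈ V)
    (hinacc : ∀ S ∈ V,
      (∀ g : G, (π g : Matrix (Fin n) (Fin n) ℂ) * S
          = S * (π g : Matrix (Fin n) (Fin n) ℂ)) →
      ∃ c : ℂ, S = c • (1 : Matrix (Fin n) (Fin n) ℂ)) :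
    ∀ p q : κ, ∃ c : ℂ, ∀ i j : ι,
      (inner ℂ (ψ i) (Matrix.toEuclideanLin (star (E p) * E q) (ψ j)) : ℂ)
        = if i = j then c else 0 :=
  knill_laflamme_of_inaccessible_general π θ hθ ψ hortho heig E V hEV hclosed hinacc
end

section
/- (First group-factorization method.) Let K be a subgroup of G and S_R a finite subset of G such that the multiplication map K × S_R → G, (k, s) ↦ k·s, is a bijection. Let O be an n×n complex matrix invariant under conjugation by the representatives: π(s) O π(s)* = O for every s ∈ S_R. Then the symmetrization over the subgroup equals the symmetrization over the whole group: (1/|K|) ∑_{k ∈ K} π(k) O π(k)* = Π_G(O). -/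
/-- First group-factorization method: if `G = K·S_R` (unique factorization) and `O` is
invariant under conjugation by the representatives in `S_R`, then symmetrizing over the
subgroup `K` equals symmetrizing over the whole group `G`. -/
theorem subgroup_symmetrization_of_coset_invariance {G : Type*} [Group G] [Fintype G]
    {n : ℕ} (hn : 0 < n) (π : G →* Matrix.unitaryGroup (Fin n) ℂ)
    (K : Subgroup G) [Fintype K] (SR : Finset G)
    (hfact : Function.Bijective (fun p : K × SR => (p.1 : G) * (p.2 : G)))
    (O : Matrix (Fin n) (Fin n) ℂ)
    (hinv : ∀ s ∈ SR,
      (π s : Matrix (Fin n) (Fin n) ℂ) * O * star (π s : Matrix (Fin n) (Fin n) ℂ) = O) :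
    (Fintype.card K : ℂ)⁻¹ • ∑ k : K,
        (π (k : G) : Matrix (Fin n) (Fin n) ℂ) * O
          * star (π (k : G) : Matrix (Fin n) (Fin n) ℂ)
      = symG π O := by
  classical
  have hcardG : Fintype.card G = Fintype.card K * SR.card := by
    rw [← Fintype.card_of_bijective hfact, Fintype.card_prod, Fintype.card_coe]
  have hKne : (Fintype.card K : ℂ) ≠ 0 := Nat.cast_ne_zero.mpr Fintype.card_ne_zero
  have hSpos : 0 < SR.card := by
    have h := Fintype.card_pos (α := G)
    rw [hcardG] at h
    exact Nat.pos_of_ne_zero (fun h0 => by simp [h0] at h)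
  have hSne : (SR.card : ℂ) ≠ 0 := Nat.cast_ne_zero.mpr hSpos.ne'
  have key : ∑ g : G, (π g : Matrix (Fin n) (Fin n) ℂ) * O * star (π g : Matrix (Fin n) (Fin n) ℂ)
      = SR.card • ∑ k : K, (π (k : G) : Matrix (Fin n) (Fin n) ℂ) * O
          * star (π (k : G) : Matrix (Fin n) (Fin n) ℂ) := by
    rw [← Fintype.sum_bijective _ hfact _
      (fun g => (π g : Matrix (Fin n) (Fin n) ℂ) * O * star (π g : Matrix (Fin n) (Fin n) ℂ))
      (fun p => rfl)]
    rw [Fintype.sum_prod_type, Finset.sum_comm]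
    have inner : ∀ s : SR, (∑ k : K,
        (π ((k : G) * (s : G)) : Matrix (Fin n) (Fin n) ℂ) * O
          * star (π ((k : G) * (s : G)) : Matrix (Fin n) (Fin n) ℂ))
        = ∑ k : K, (π (k : G) : Matrix (Fin n) (Fin n) ℂ) * O
          * star (π (k : G) : Matrix (Fin n) (Fin n) ℂ) := by
      intro s
      refine Finset.sum_congr rfl (fun k _ => ?_)
      have hc : (π ((k : G) * (s : G)) : Matrix (Fin n) (Fin n) ℂ)
          = (π (k : G) : Matrix (Fin n) (Fin n) ℂ) * (π (s : G) : Matrix (Fin n) (Fin n) ℂ) := by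
        rw [map_mul]; rfl
      rw [hc, star_mul]
      calc (π (k : G) : Matrix (Fin n) (Fin n) ℂ) * (π (s : G) : Matrix (Fin n) (Fin n) ℂ) * O
            * (star (π (s : G) : Matrix (Fin n) (Fin n) ℂ)
                * star (π (k : G) : Matrix (Fin n) (Fin n) ℂ))
          = (π (k : G) : Matrix (Fin n) (Fin n) ℂ)
              * ((π (s : G) : Matrix (Fin n) (Fin n) ℂ) * O
                * star (π (s : G) : Matrix (Fin n) (Fin n) ℂ))
              * star (π (k : G) : Matrix (Fin n) (Fin n) ℂ) := by
            simp only [mul_assoc]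
        _ = (π (k : G) : Matrix (Fin n) (Fin n) ℂ) * O
              * star (π (k : G) : Matrix (Fin n) (Fin n) ℂ) := by
            rw [hinv (s : G) s.2]
    calc (∑ s : SR, ∑ k : K,
          (π ((k : G) * (s : G)) : Matrix (Fin n) (Fin n) ℂ) * O
            * star (π ((k : G) * (s : G)) : Matrix (Fin n) (Fin n) ℂ))
        = ∑ _s : SR, ∑ k : K, (π (k : G) : Matrix (Fin n) (Fin n) ℂ) * O
            * star (π (k : G) : Matrix (Fin n) (Fin n) ℂ) :=
          Finset.sum_congr rfl (fun s _ => inner s)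
      _ = SR.card • ∑ k : K, (π (k : G) : Matrix (Fin n) (Fin n) ℂ) * O
            * star (π (k : G) : Matrix (Fin n) (Fin n) ℂ) := by
          rw [Finset.sum_const, Finset.card_univ, Fintype.card_coe]
  rw [symG, key, hcardG, ← Nat.cast_smul_eq_nsmul ℂ, smul_smul, Nat.cast_mul, mul_inv,
    mul_assoc, inv_mul_cancel₀ hSne, mul_one]
end

section
/- (Second group-factorization method.) Let K be a normal subgroup of G and S_L a finite subset of G such that the multiplication map S_L × K → G, (s, k) ↦ s·k, is a bijection. Let O be an n×n complex matrix invariant under conjugation by K: π(k) O π(k)* = O for every k ∈ K. Then the symmetrization over the coset representatives equals the symmetrization over the whole group: (1/|S_L|) ∑_{s ∈ S_L} π(s) O π(s)* = Π_G(O). -/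
/-! Since every `g` is uniquely `s * k` with `s ∈ S_L`, `k ∈ K`, and `g ↦ π(g) O π(g)*` is constant
on the cosets `s K` by the `K`-invariance of `O`, the sum over `G` is `|K|` times the sum over
`S_L`, while `|G| = |S_L| |K|`. -/

section FactorizationSum

variable {G : Type*} [Group G] {K : Subgroup G} {SL : Finset G}

theorem Nat.card_eq_card_mul_card_of_bijective_mul
    (hfact : Function.Bijective (fun p : SL × K => (p.1 : G) * (p.2 : G))) :
    Nat.card G = SL.card * Nat.card K := by
  rw [← Nat.card_congr (Equiv.ofBijective _ hfact), Nat.card_prod, Nat.card_eq_finsetCard]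

variable [Fintype G] {M : Type*} [AddCommMonoid M] {F : G → M}

theorem sum_eq_card_smul_sum_of_bijective_mul
    (hfact : Function.Bijective (fun p : SL × K => (p.1 : G) * (p.2 : G)))
    (hF : ∀ g, ∀ k ∈ K, F (g * k) = F g) :
    ∑ g, F g = Nat.card K • ∑ s ∈ SL, F s := by
  let _ : Fintype K := Fintype.ofFinite K
  calc ∑ g, F g = ∑ p : SL × K, F (p.1 * p.2) :=
        (Fintype.sum_bijective _ hfact _ F fun _ => rfl).symm
    _ = ∑ s : SL, ∑ _k : K, F s := by
        rw [Fintype.sum_prod_type]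
        exact Finset.sum_congr rfl fun s _ => Finset.sum_congr rfl fun k _ => hF s k k.2
    _ = Nat.card K • ∑ s ∈ SL, F s := by
        simp only [Finset.sum_const, Finset.card_univ, Nat.card_eq_fintype_card, Finset.smul_sum]
        exact Finset.sum_coe_sort SL fun s => Fintype.card K • F s

theorem inv_card_smul_sum_eq_of_bijective_mul {𝕜 : Type*} [Field 𝕜] [CharZero 𝕜]
    [Module 𝕜 M] (hfact : Function.Bijective (fun p : SL × K => (p.1 : G) * (p.2 : G)))
    (hF : ∀ g, ∀ k ∈ K, F (g * k) = F g) :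
    (Fintype.card G : 𝕜)⁻¹ • ∑ g, F g = (SL.card : 𝕜)⁻¹ • ∑ s ∈ SL, F s := by
  have hK : (Nat.card K : 𝕜) ≠ 0 := Nat.cast_ne_zero.2 Nat.card_pos.ne'
  rw [sum_eq_card_smul_sum_of_bijective_mul hfact hF, ← Nat.card_eq_fintype_card,
    Nat.card_eq_card_mul_card_of_bijective_mul hfact, ← Nat.cast_smul_eq_nsmul 𝕜, smul_smul,
    Nat.cast_mul, mul_inv, mul_assoc, inv_mul_cancel₀ hK, mul_one]

end FactorizationSum

theorem coset_symmetrization_of_normal_invariance_general {G : Type*} [Group G] [Fintype G]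
    {n : ℕ} (π : G →* Matrix.unitaryGroup (Fin n) ℂ)
    (K : Subgroup G) (SL : Finset G)
    (hfact : Function.Bijective (fun p : SL × K => (p.1 : G) * (p.2 : G)))
    (O : Matrix (Fin n) (Fin n) ℂ)
    (hinv : ∀ k ∈ K,
      (π k : Matrix (Fin n) (Fin n) ℂ) * O * star (π k : Matrix (Fin n) (Fin n) ℂ) = O) :
    (SL.card : ℂ)⁻¹ • ∑ s ∈ SL,
        (π s : Matrix (Fin n) (Fin n) ℂ) * O * star (π s : Matrix (Fin n) (Fin n) ℂ)
      = symG π O := by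
  refine (inv_card_smul_sum_eq_of_bijective_mul hfact fun g k hk => ?_).symm
  calc (π (g * k) : Matrix (Fin n) (Fin n) ℂ) * O * star (π (g * k) : Matrix (Fin n) (Fin n) ℂ)
      = π g * ((π k : Matrix (Fin n) (Fin n) ℂ) * O * star (π k : Matrix (Fin n) (Fin n) ℂ))
          * star (π g : Matrix (Fin n) (Fin n) ℂ) := by
        simp only [map_mul, Submonoid.coe_mul, star_mul, mul_assoc]
    _ = π g * O * star (π g : Matrix (Fin n) (Fin n) ℂ) := by rw [hinv k hk]

/-- Second group-factorization method: if `K ⊴ G`, `G = S_L·K` (unique factorization)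
and `O` is invariant under conjugation by `K`, then symmetrizing over the coset
representatives `S_L` equals symmetrizing over the whole group `G`. -/
theorem coset_symmetrization_of_normal_invariance {G : Type*} [Group G] [Fintype G]
    {n : ℕ} (hn : 0 < n) (π : G →* Matrix.unitaryGroup (Fin n) ℂ)
    (K : Subgroup G) [K.Normal] (SL : Finset G)
    (hfact : Function.Bijective (fun p : SL × K => (p.1 : G) * (p.2 : G)))
    (O : Matrix (Fin n) (Fin n) ℂ)
    (hinv : ∀ k ∈ K,
      (π k : Matrix (Fin n) (Fin n) ℂ) * O * star (π k : Matrix (Fin n) (Fin n) ℂ) = O) :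
    (SL.card : ℂ)⁻¹ • ∑ s ∈ SL,
        (π s : Matrix (Fin n) (Fin n) ℂ) * O * star (π s : Matrix (Fin n) (Fin n) ℂ)
      = symG π O :=
  coset_symmetrization_of_normal_invariance_general π K SL hfact O hinv
end

section
/- (Reduction by the center.) Let Z be a subgroup of G such that for every z ∈ Z the matrix π(z) is a scalar multiple of the identity, and let S be a finite subset of G such that the multiplication map S × Z → G, (s, z) ↦ s·z, is a bijection. Then for every n×n complex matrix O, (1/|S|) ∑_{s ∈ S} π(s) O π(s)* = Π_G(O); that is, the symmetrization over a set of representatives of the cosets of Z implements the full group symmetrization. -/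
/-- Reduction by the center: if every element of a subgroup `Z` is represented by a
scalar multiple of the identity and `G = S·Z` (unique factorization), then for every
matrix `O`, symmetrizing over the coset representatives `S` implements the full group
symmetrization `Π_G(O)`. -/
theorem center_reduction_symmetrization {G : Type*} [Group G] [Fintype G]
    {n : ℕ} (hn : 0 < n) (π : G →* Matrix.unitaryGroup (Fin n) ℂ)
    (Z : Subgroup G)
    (hZ : ∀ z : Z, ∃ c : ℂ,
      (π (z : G) : Matrix (Fin n) (Fin n) ℂ) = c • (1 : Matrix (Fin n) (Fin n) ℂ))
    (S : Finset G)
    (hfact : Function.Bijective (fun p : S × Z => (p.1 : G) * (p.2 : G)))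
    (O : Matrix (Fin n) (Fin n) ℂ) :
    (S.card : ℂ)⁻¹ • ∑ s ∈ S,
        (π s : Matrix (Fin n) (Fin n) ℂ) * O * star (π s : Matrix (Fin n) (Fin n) ℂ)
      = symG π O := by
  classical
  set f : G → Matrix (Fin n) (Fin n) ℂ := fun g =>
    (π g : Matrix (Fin n) (Fin n) ℂ) * O * star (π g : Matrix (Fin n) (Fin n) ℂ) with hf
  have hcard : Fintype.card G = S.card * Fintype.card Z := by
    rw [← Fintype.card_coe S, ← Fintype.card_prod]
    exact (Fintype.card_of_bijective hfact).symm
  have key : ∀ (s : G) (z : Z), f (s * z) = f s := by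
    intro s z
    obtain ⟨c, hc⟩ := hZ z
    have hu : star ((π (z : G) : Matrix (Fin n) (Fin n) ℂ)) *
        (π (z : G) : Matrix (Fin n) (Fin n) ℂ) = 1 := (π (z : G)).2.1
    rw [hc] at hu
    have hu' : (star c * c) • (1 : Matrix (Fin n) (Fin n) ℂ) = 1 := by
      rw [star_smul, star_one, Matrix.smul_mul, Matrix.mul_smul, smul_smul, mul_one] at hu
      exact hu
    have hcc : star c * c = 1 := by
      have := congrFun (congrFun hu' ⟨0, hn⟩) ⟨0, hn⟩
      simpa [Matrix.one_apply] using this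
    simp only [hf, map_mul, MulMemClass.coe_mul, hc]
    rw [star_mul, star_smul, star_one]
    calc (π s : Matrix (Fin n) (Fin n) ℂ) * (c • 1) * O *
          ((star c • 1) * star (π s : Matrix (Fin n) (Fin n) ℂ))
        = (c * star c) • ((π s : Matrix (Fin n) (Fin n) ℂ) * O *
            star (π s : Matrix (Fin n) (Fin n) ℂ)) := by
          simp [Matrix.mul_smul, Matrix.smul_mul, smul_smul, mul_comm, Matrix.mul_assoc]
      _ = _ := by rw [mul_comm, hcc, one_smul]
  have hsum : ∑ g : G, f g = (Fintype.card Z) • ∑ s ∈ S, f s := by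
    rw [← Fintype.sum_bijective _ hfact (fun p => f ((p.1 : G) * (p.2 : G))) f
      (fun p => rfl)]
    rw [Fintype.sum_prod_type]
    simp only [key]
    rw [← Finset.sum_coe_sort S f]
    simp [Finset.sum_const, mul_comm, Finset.smul_sum]
  have hZ0 : (Fintype.card Z : ℂ) ≠ 0 := by
    exact_mod_cast Nat.cast_ne_zero.mpr Fintype.card_ne_zero
  have hG0 : (Fintype.card G : ℕ) ≠ 0 := Fintype.card_ne_zero
  have hS0 : (S.card : ℂ) ≠ 0 := by
    have : S.card ≠ 0 := by
      intro h
      rw [hcard, h, zero_mul] at hG0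
      exact hG0 rfl
    exact_mod_cast this
  rw [symG, hsum, hcard]
  rw [← Nat.cast_smul_eq_nsmul ℂ, smul_smul]
  congr 1
  push_cast
  field_simp
end

section
/- (Inaccessibility of the icosahedral group to the spin-L representations for L = 1, …, 5.) For every L ∈ {1, 2, 3, 4, 5}, the icosahedral character sum vanishes: (2L+1) + 15·χ_L(π) + 20·χ_L(2π/3) + 12·χ_L(2π/5) + 12·χ_L(4π/5) = 0, where χ_L(θ) = sin((2L+1)θ/2) / sin(θ/2). Here 1, 15, 20, 12, 12 are the sizes of the conjugacy classes of the icosahedral rotation group (of order 60) with rotation angles 0, π, 2π/3, 2π/5, 4π/5 respectively, and the vanishing of the sum means the multiplicity of the trivial irreducible representation of the icosahedral group in the spin-L representation is zero. -/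
open Real in
private lemma icos_s1_pos : Real.sin (Real.pi/5) > 0 :=
  Real.sin_pos_of_pos_of_lt_pi (by positivity) (by linarith [Real.pi_pos])

open Real in
private lemma icos_s2 : Real.sin (2*Real.pi/5) = 2 * Real.sin (Real.pi/5) * Real.cos (Real.pi/5) := by
  rw [show 2*Real.pi/5 = 2*(Real.pi/5) by ring, Real.sin_two_mul]

open Real in
private lemma icos_s2_pos : Real.sin (2*Real.pi/5) > 0 :=
  Real.sin_pos_of_pos_of_lt_pi (by positivity) (by linarith [Real.pi_pos])

open Real in
private lemma icos_s3_pos : Real.sin (Real.pi/3) > 0 :=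
  Real.sin_pos_of_pos_of_lt_pi (by positivity) (by linarith [Real.pi_pos])

open Real in
private lemma icos_5 : Real.sqrt 5 * Real.sqrt 5 = 5 := Real.mul_self_sqrt (by norm_num)

/-- The SU(2) character of the spin-`L` representation at rotation angle `θ`:
`χ_L(θ) = sin((2L+1)θ/2) / sin(θ/2)`. -/
noncomputable def su2Char (L : ℕ) (θ : ℝ) : ℝ :=
  Real.sin ((2 * (L : ℝ) + 1) * θ / 2) / Real.sin (θ / 2)

open Real in
private lemma icosA1 : su2Char 1 Real.pi = -1 := by
  rw [su2Char, show (2*((1:ℕ):ℝ)+1) * Real.pi / 2 = Real.pi + Real.pi/2 by push_cast; ring,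
    Real.sin_add]; simp

open Real in
private lemma icosA2 : su2Char 2 Real.pi = 1 := by
  rw [su2Char, show (2*((2:ℕ):ℝ)+1) * Real.pi / 2 = 2*Real.pi + Real.pi/2 by push_cast; ring,
    Real.sin_add]; simp

open Real in
private lemma icosA3 : su2Char 3 Real.pi = -1 := by
  rw [su2Char, show (2*((3:ℕ):ℝ)+1) * Real.pi / 2 = 2*Real.pi + (Real.pi + Real.pi/2) by push_cast; ring,
    Real.sin_add, Real.sin_add]; simp

open Real in
private lemma icosA4 : su2Char 4 Real.pi = 1 := by
  rw [su2Char, show (2*((4:ℕ):ℝ)+1) * Real.pi / 2 = 2*Real.pi + (2*Real.pi + Real.pi/2) by push_cast; ring,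
    Real.sin_add, Real.sin_add]; simp

open Real in
private lemma icosA5 : su2Char 5 Real.pi = -1 := by
  rw [su2Char, show (2*((5:ℕ):ℝ)+1) * Real.pi / 2 = 2*Real.pi + (2*Real.pi + (Real.pi + Real.pi/2)) by push_cast; ring,
    Real.sin_add, Real.sin_add, Real.sin_add]; simp

open Real in
private lemma icosB1 : su2Char 1 (2*Real.pi/3) = 0 := by
  rw [su2Char, show (2*((1:ℕ):ℝ)+1) * (2*Real.pi/3) / 2 = Real.pi by push_cast; ring]
  simp

open Real in
private lemma icosB2 : su2Char 2 (2*Real.pi/3) = -1 := by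
  rw [su2Char, show (2*((2:ℕ):ℝ)+1) * (2*Real.pi/3) / 2 = 2*Real.pi - Real.pi/3 by push_cast; ring,
    show (2*Real.pi/3)/2 = Real.pi/3 by ring, Real.sin_sub]
  simp [div_eq_iff (ne_of_gt icos_s3_pos)]

open Real in
private lemma icosB3 : su2Char 3 (2*Real.pi/3) = 1 := by
  rw [su2Char, show (2*((3:ℕ):ℝ)+1) * (2*Real.pi/3) / 2 = 2*Real.pi + Real.pi/3 by push_cast; ring,
    show (2*Real.pi/3)/2 = Real.pi/3 by ring, Real.sin_add]
  simp [div_eq_iff (ne_of_gt icos_s3_pos)]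

open Real in
private lemma icosB4 : su2Char 4 (2*Real.pi/3) = 0 := by
  rw [su2Char, show (2*((4:ℕ):ℝ)+1) * (2*Real.pi/3) / 2 = 2*Real.pi + Real.pi by push_cast; ring,
    Real.sin_add]
  simp

open Real in
private lemma icosB5 : su2Char 5 (2*Real.pi/3) = -1 := by
  rw [su2Char, show (2*((5:ℕ):ℝ)+1) * (2*Real.pi/3) / 2 = 2*Real.pi + (2*Real.pi - Real.pi/3) by push_cast; ring,
    show (2*Real.pi/3)/2 = Real.pi/3 by ring, Real.sin_add, Real.sin_sub]
  simp [div_eq_iff (ne_of_gt icos_s3_pos)]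

open Real in
private lemma icosC1 : su2Char 1 (2*Real.pi/5) = (1+Real.sqrt 5)/2 := by
  rw [su2Char, show (2*((1:ℕ):ℝ)+1) * (2*Real.pi/5) / 2 = Real.pi - 2*Real.pi/5 by push_cast; ring,
    show (2*Real.pi/5)/2 = Real.pi/5 by ring, Real.sin_pi_sub, icos_s2, Real.cos_pi_div_five]
  field_simp [ne_of_gt icos_s1_pos]
  ring

open Real in
private lemma icosC2 : su2Char 2 (2*Real.pi/5) = 0 := by
  rw [su2Char, show (2*((2:ℕ):ℝ)+1) * (2*Real.pi/5) / 2 = Real.pi by push_cast; ring]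
  simp

open Real in
private lemma icosC3 : su2Char 3 (2*Real.pi/5) = -(1+Real.sqrt 5)/2 := by
  rw [su2Char, show (2*((3:ℕ):ℝ)+1) * (2*Real.pi/5) / 2 = Real.pi + 2*Real.pi/5 by push_cast; ring,
    show (2*Real.pi/5)/2 = Real.pi/5 by ring, Real.sin_add, Real.sin_pi, Real.cos_pi,
    icos_s2, Real.cos_pi_div_five]
  field_simp [ne_of_gt icos_s1_pos]
  ring

open Real in
private lemma icosC4 : su2Char 4 (2*Real.pi/5) = -1 := by
  rw [su2Char, show (2*((4:ℕ):ℝ)+1) * (2*Real.pi/5) / 2 = 2*Real.pi - Real.pi/5 by push_cast; ring,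
    show (2*Real.pi/5)/2 = Real.pi/5 by ring, Real.sin_sub]
  simp [div_eq_iff (ne_of_gt icos_s1_pos)]

open Real in
private lemma icosC5 : su2Char 5 (2*Real.pi/5) = 1 := by
  rw [su2Char, show (2*((5:ℕ):ℝ)+1) * (2*Real.pi/5) / 2 = 2*Real.pi + Real.pi/5 by push_cast; ring,
    show (2*Real.pi/5)/2 = Real.pi/5 by ring, Real.sin_add]
  simp [div_eq_iff (ne_of_gt icos_s1_pos)]

open Real in
private lemma icosD1 : su2Char 1 (4*Real.pi/5) = (1-Real.sqrt 5)/2 := by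
  rw [su2Char, show (2*((1:ℕ):ℝ)+1) * (4*Real.pi/5) / 2 = Real.pi + Real.pi/5 by push_cast; ring,
    show (4*Real.pi/5)/2 = 2*Real.pi/5 by ring, Real.sin_add, Real.sin_pi, Real.cos_pi,
    icos_s2, Real.cos_pi_div_five]
  have h1 := ne_of_gt icos_s1_pos
  field_simp
  nlinarith [icos_5, icos_s1_pos]

open Real in
private lemma icosD2 : su2Char 2 (4*Real.pi/5) = 0 := by
  rw [su2Char, show (2*((2:ℕ):ℝ)+1) * (4*Real.pi/5) / 2 = 2*Real.pi by push_cast; ring]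
  simp [Real.sin_two_pi]

open Real in
private lemma icosD3 : su2Char 3 (4*Real.pi/5) = (Real.sqrt 5-1)/2 := by
  rw [su2Char, show (2*((3:ℕ):ℝ)+1) * (4*Real.pi/5) / 2 = 2*Real.pi + (Real.pi - Real.pi/5) by push_cast; ring,
    show (4*Real.pi/5)/2 = 2*Real.pi/5 by ring, Real.sin_add, Real.sin_pi_sub,
    icos_s2, Real.cos_pi_div_five]
  have h1 := ne_of_gt icos_s1_pos
  simp only [Real.sin_two_pi, Real.cos_two_pi, zero_mul, one_mul, zero_add]
  field_simp
  nlinarith [icos_5, icos_s1_pos]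

open Real in
private lemma icosD4 : su2Char 4 (4*Real.pi/5) = -1 := by
  rw [su2Char, show (2*((4:ℕ):ℝ)+1) * (4*Real.pi/5) / 2 = 2*Real.pi + (2*Real.pi - 2*Real.pi/5) by push_cast; ring,
    show (4*Real.pi/5)/2 = 2*Real.pi/5 by ring, Real.sin_add, Real.sin_sub]
  simp [div_eq_iff (ne_of_gt icos_s2_pos)]

open Real in
private lemma icosD5 : su2Char 5 (4*Real.pi/5) = 1 := by
  rw [su2Char, show (2*((5:ℕ):ℝ)+1) * (4*Real.pi/5) / 2 = 2*Real.pi + (2*Real.pi + 2*Real.pi/5) by push_cast; ring,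
    show (4*Real.pi/5)/2 = 2*Real.pi/5 by ring, Real.sin_add, Real.sin_add]
  simp [div_eq_iff (ne_of_gt icos_s2_pos)]

/-- Inaccessibility of the icosahedral group to the spin-`L` representations for
`L = 1, …, 5`: the icosahedral character sum
`(2L+1) + 15·χ_L(π) + 20·χ_L(2π/3) + 12·χ_L(2π/5) + 12·χ_L(4π/5)` vanishes, where
`1, 15, 20, 12, 12` are the conjugacy-class sizes of the icosahedral rotation group of
order `60` with rotation angles `0, π, 2π/3, 2π/5, 4π/5` respectively. -/
theorem icosahedral_character_sum :
    ∀ L : ℕ, L ∈ ({1, 2, 3, 4, 5} : Set ℕ) →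
      (2 * (L : ℝ) + 1) + 15 * su2Char L Real.pi + 20 * su2Char L (2 * Real.pi / 3)
          + 12 * su2Char L (2 * Real.pi / 5) + 12 * su2Char L (4 * Real.pi / 5)
        = 0 := by
  intro L hL
  simp only [Set.mem_insert_iff, Set.mem_singleton_iff] at hL
  rcases hL with rfl | rfl | rfl | rfl | rfl
  · rw [icosA1, icosB1, icosC1, icosD1]; push_cast; ring
  · rw [icosA2, icosB2, icosC2, icosD2]; push_cast; ring
  · rw [icosA3, icosB3, icosC3, icosD3]; push_cast; ring
  · rw [icosA4, icosB4, icosC4, icosD4]; push_cast; ring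
  · rw [icosA5, icosB5, icosC5, icosD5]; push_cast; ring
end
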